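/- arXiv:2308.02261 — 7 statements merged into one kernel-verified Lean document; each statement's English description precedes it below -/
import Mathlib

section
/- For a convex differentiable function f, L-Lipschitz continuity of ∇f implies the cocoercivity inequality ⟨∇f(y) - ∇f(x), y - x⟩ ≥ (1/L) ‖∇f(y) - ∇f(x)‖² for all x, y. -/
/-!
Convexity gives the lower bound `f x + ⟪f' x, y - x⟫ ≤ f y`, and the Lipschitz gradient gives the
quadratic upper bound `f y ≤ f x + ⟪f' x, y - x⟫ + L / 2 * ‖y - x‖ ^ 2`. Chaining the two through
the point `z = y - L⁻¹ • (f' y - f' x)` sharpens the lower bound by `‖f' y - f' x‖ ^ 2 / (2 * L)`;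
adding this sharpened bound to its copy with `x` and `y` swapped gives cocoercivity.
-/

open scoped RealInnerProductSpace
open Set

variable {E : Type*} [NormedAddCommGroup E] [InnerProductSpace ℝ E] [CompleteSpace E]
  {f : E → ℝ} {f' : E → E} {L : ℝ}

theorem HasGradientAt.hasDerivAt_comp_add_smul {g x v : E} {t : ℝ}
    (h : HasGradientAt f g (x + t • v)) :
    HasDerivAt (fun s : ℝ => f (x + s • v)) ⟪g, v⟫ t := by
  have hline : HasDerivAt (fun s : ℝ => x + s • v) v t := by
    simpa using ((hasDerivAt_id t).smul_const v).const_add x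
  simpa [Function.comp_def] using h.hasFDerivAt.comp_hasDerivAt t hline

theorem ConvexOn.add_inner_le_of_hasGradientAt (hf : ConvexOn ℝ univ f) {g x : E}
    (hg : HasGradientAt f g x) (y : E) :
    f x + ⟪g, y - x⟫ ≤ f y := by
  have hconv : ConvexOn ℝ univ (fun s : ℝ => f (x + s • (y - x))) := by
    simpa [Function.comp_def, AffineMap.lineMap_apply_module', add_comm]
      using hf.comp_affineMap (AffineMap.lineMap x y)
  have hderiv := hconv.le_slope_of_hasDerivAt (mem_univ 0) (mem_univ 1) zero_lt_one
    (HasGradientAt.hasDerivAt_comp_add_smul (by simpa using hg))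
  simp only [slope_def_field, one_smul, add_sub_cancel, zero_smul, add_zero, sub_zero, div_one]
    at hderiv
  linarith

theorem le_add_inner_add_sq_of_lipschitz_gradient (hgrad : ∀ z, HasGradientAt f (f' z) z)
    (hlip : ∀ x y, ‖f' x - f' y‖ ≤ L * ‖x - y‖) (x y : E) :
    f y ≤ f x + ⟪f' x, y - x⟫ + L / 2 * ‖y - x‖ ^ 2 := by
  set v := y - x
  -- the gap between the quadratic upper model and `f` along the segment; it is nondecreasing
  -- for `t ≥ 0` because `f'` is `L`-Lipschitz
  set ψ : ℝ → ℝ := fun t => t * ⟪f' x, v⟫ + L / 2 * t ^ 2 * ‖v‖ ^ 2 - f (x + t • v)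
  have hψ : ∀ t, HasDerivAt ψ (⟪f' x, v⟫ + L * t * ‖v‖ ^ 2 - ⟪f' (x + t • v), v⟫) t := by
    intro t
    have hq : HasDerivAt (fun t : ℝ => t * ⟪f' x, v⟫ + L / 2 * t ^ 2 * ‖v‖ ^ 2)
        (⟪f' x, v⟫ + L * t * ‖v‖ ^ 2) t := by
      refine (((hasDerivAt_id' t).mul_const _).add
        (((hasDerivAt_pow 2 t).const_mul (L / 2)).mul_const _)).congr_deriv ?_
      push_cast; ring
    exact hq.sub (hgrad _).hasDerivAt_comp_add_smul
  have hψ' : ∀ t ∈ interior (Ici (0 : ℝ)),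
      0 ≤ ⟪f' x, v⟫ + L * t * ‖v‖ ^ 2 - ⟪f' (x + t • v), v⟫ := by
    intro t ht
    rw [interior_Ici, mem_Ioi] at ht
    have hstep : ‖f' (x + t • v) - f' x‖ ≤ L * t * ‖v‖ := by
      simpa [norm_smul, abs_of_pos ht, mul_assoc] using hlip (x + t • v) x
    have hinner : ⟪f' (x + t • v) - f' x, v⟫ ≤ L * t * ‖v‖ ^ 2 :=
      calc _ ≤ ‖f' (x + t • v) - f' x‖ * ‖v‖ := real_inner_le_norm _ _
        _ ≤ L * t * ‖v‖ * ‖v‖ := by gcongr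
        _ = L * t * ‖v‖ ^ 2 := by ring
    rw [inner_sub_left] at hinner
    linarith
  have hmono := monotoneOn_of_hasDerivWithinAt_nonneg (convex_Ici 0)
    (fun t _ => (hψ t).continuousAt.continuousWithinAt)
    (fun t _ => (hψ t).hasDerivWithinAt) hψ'
  have h01 : ψ 0 ≤ ψ 1 := hmono self_mem_Ici (mem_Ici.mpr zero_le_one) zero_le_one
  simp only [ψ, v, zero_smul, one_smul, add_zero, add_sub_cancel] at h01
  linarith

theorem add_inner_add_sq_norm_gradient_sub_le (hconv : ConvexOn ℝ univ f)
    (hgrad : ∀ z, HasGradientAt f (f' z) z) (hL : 0 < L)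
    (hlip : ∀ x y, ‖f' x - f' y‖ ≤ L * ‖x - y‖) (x y : E) :
    f x + ⟪f' x, y - x⟫ + 1 / (2 * L) * ‖f' y - f' x‖ ^ 2 ≤ f y := by
  set G := f' y - f' x
  set z := y - L⁻¹ • G
  have hx : f x + ⟪f' x, z - x⟫ ≤ f z := hconv.add_inner_le_of_hasGradientAt (hgrad x) z
  have hy : f z ≤ f y + ⟪f' y, z - y⟫ + L / 2 * ‖z - y‖ ^ 2 :=
    le_add_inner_add_sq_of_lipschitz_gradient hgrad hlip y z
  have hzx : ⟪f' x, z - x⟫ = ⟪f' x, y - x⟫ - L⁻¹ * ⟪f' x, G⟫ := by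
    rw [show z - x = (y - x) - L⁻¹ • G by simp only [z]; abel, inner_sub_right,
      real_inner_smul_right]
  have hzy : ⟪f' y, z - y⟫ = -(L⁻¹ * ⟪f' y, G⟫) := by
    rw [show z - y = -(L⁻¹ • G) by simp only [z]; abel, inner_neg_right, real_inner_smul_right]
  have hnorm : ‖z - y‖ ^ 2 = L⁻¹ ^ 2 * ‖G‖ ^ 2 := by
    rw [show z - y = -(L⁻¹ • G) by simp only [z]; abel, norm_neg, norm_smul, Real.norm_eq_abs,
      abs_of_pos (inv_pos.mpr hL), mul_pow]
  have hG : L⁻¹ * ⟪f' y, G⟫ - L⁻¹ * ⟪f' x, G⟫ = L⁻¹ * ‖G‖ ^ 2 := by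
    rw [← mul_sub, ← inner_sub_left, real_inner_self_eq_norm_sq]
  have hcoef : L / 2 * (L⁻¹ ^ 2 * ‖G‖ ^ 2) = 1 / (2 * L) * ‖G‖ ^ 2 := by
    field_simp
  have hcoef' : L⁻¹ * ‖G‖ ^ 2 = 2 * (1 / (2 * L) * ‖G‖ ^ 2) := by
    field_simp
  rw [hzx] at hx
  rw [hzy, hnorm, hcoef] at hy
  linarith

theorem lipschitz_grad_implies_cocoercive {d : ℕ}
    (f : EuclideanSpace ℝ (Fin d) → ℝ) (f' : EuclideanSpace ℝ (Fin d) → EuclideanSpace ℝ (Fin d))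
    (hconv : ConvexOn ℝ Set.univ f)
    (hgrad : ∀ z, HasGradientAt f (f' z) z)
    (L : ℝ) (hL : 0 < L)
    (hlip : ∀ x y, ‖f' x - f' y‖ ≤ L * ‖x - y‖) :
    ∀ x y, ⟪f' y - f' x, y - x⟫ ≥ (1 / L) * ‖f' y - f' x‖ ^ 2 := by
  intro x y
  have hxy := add_inner_add_sq_norm_gradient_sub_le hconv hgrad hL hlip x y
  have hyx := add_inner_add_sq_norm_gradient_sub_le hconv hgrad hL hlip y x
  rw [norm_sub_rev, ← neg_sub y x, inner_neg_right] at hyx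
  have hcoef : 1 / L = 2 * (1 / (2 * L)) := by field_simp
  rw [inner_sub_left, hcoef]
  linarith
end

section
/- Let g: R^d -> R ∪ {+∞} be convex lower semicontinuous, f: R^d -> R convex differentiable, α > 0, x ∈ R^d, and x⁺ = prox_{αg}(x - α∇f(x)). If u ∈ ∂g(x) and u⁺ ∈ ∂g(x⁺) is the subgradient satisfying x⁺ = x - α(∇f(x) + u⁺), then ‖∇f(x) + u⁺‖ ≤ ‖∇f(x) + u‖. -/
open scoped RealInnerProductSpace

theorem prox_subgrad_norm_decrease {d : ℕ}
    (f g : EuclideanSpace ℝ (Fin d) → ℝ)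
    (f' : EuclideanSpace ℝ (Fin d) → EuclideanSpace ℝ (Fin d))
    (hfconv : ConvexOn ℝ Set.univ f)
    (hgconv : ConvexOn ℝ Set.univ g)
    (hglsc : LowerSemicontinuous g)
    (hgrad : ∀ z, HasGradientAt f (f' z) z)
    (α : ℝ) (hα : 0 < α)
    (x x' u u' : EuclideanSpace ℝ (Fin d))
    -- u ∈ ∂g(x)
    (hu : ∀ y, g x + ⟪u, y - x⟫ ≤ g y)
    -- u' ∈ ∂g(x') is the subgradient from the implicit proximal update
    -- x' = prox_{αg}(x - α∇f(x)), i.e. x' = x - α(∇f(x) + u')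
    (hu' : ∀ y, g x' + ⟪u', y - x'⟫ ≤ g y)
    (hx' : x' = x - α • (f' x + u')) :
    ‖f' x + u'‖ ≤ ‖f' x + u‖ := by
  set v := f' x + u' with hv
  set w := f' x + u with hw
  have h1 := hu x'
  have h2 := hu' x
  have hmono : ⟪u - u', x' - x⟫ ≤ 0 := by
    have := add_le_add h1 h2
    rw [inner_sub_left]
    have hxx : (x : EuclideanSpace ℝ (Fin d)) - x' = -(x' - x) := by abel
    rw [hxx, inner_neg_right] at this
    linarith
  have hdiff : x' - x = (-α) • v := by rw [hx']; module
  have hkey : ‖v‖ ^ 2 ≤ ⟪w, v⟫ := by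
    have : ⟪u - u', (-α) • v⟫ ≤ 0 := hdiff ▸ hmono
    rw [inner_smul_right] at this
    have huv : 0 ≤ ⟪u - u', v⟫ := by nlinarith
    have hwv : w - v = u - u' := by rw [hw, hv]; abel
    have : ⟪w - v, v⟫ = ⟪w, v⟫ - ⟪v, v⟫ := inner_sub_left _ _ _
    rw [hwv] at this
    rw [← real_inner_self_eq_norm_sq]
    linarith
  rcases eq_or_ne v 0 with h0 | h0
  · rw [h0, norm_zero]; exact norm_nonneg _
  · have hvpos : 0 < ‖v‖ := norm_pos_iff.mpr h0
    have hcs : ⟪w, v⟫ ≤ ‖w‖ * ‖v‖ := real_inner_le_norm w v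
    nlinarith [norm_nonneg w]
end

section
/- Let f, g be convex with f differentiable, and let x^k, x^{k-1} be consecutive iterates of the proximal gradient method with x^k = x^{k-1} - α_{k-1}(∇f(x^{k-1}) + u^k) where u^k ∈ ∂g(x^k). Then ⟨∇f(x^k) + u^k, ∇f(x^{k-1}) + u^k⟩ ≤ ‖∇f(x^{k-1}) + u^k‖². -/
/-!
Convexity of a differentiable `f` makes its gradient monotone:
`⟪∇f x - ∇f y, x - y⟫ ≥ 0`. Apply this to `x = x^{k-1}`, `y = x^k`, whose difference is
`α (∇f(x^{k-1}) + u)` by the update rule; dividing by `α > 0` and writing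
`∇f(x^{k-1}) - ∇f(x^k) = (∇f(x^{k-1}) + u) - (∇f(x^k) + u)` gives the claim.
-/

open scoped RealInnerProductSpace

section FirstOrder

variable {E : Type*} [NormedAddCommGroup E] [NormedSpace ℝ E] {f : E → ℝ} {s : Set E} {x y : E}

theorem ConvexOn.add_fderiv_sub_le {f' : E →L[ℝ] ℝ} (hf : ConvexOn ℝ s f) (hx : x ∈ s)
    (hy : y ∈ s) (hf' : HasFDerivAt f f' x) : f x + f' (y - x) ≤ f y := by
  let γ : ℝ →ᵃ[ℝ] E := AffineMap.lineMap x y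
  have hγ : ConvexOn ℝ (γ ⁻¹' s) (f ∘ γ) := hf.comp_affineMap γ
  have hderiv : HasDerivAt (f ∘ γ) (f' (y - x)) 0 := by
    have hf'γ : HasFDerivAt f f' (γ 0) := by simpa [γ] using hf'
    exact hf'γ.comp_hasDerivAt 0 AffineMap.hasDerivAt_lineMap
  have hslope := hγ.le_slope_of_hasDerivAt (x := 0) (y := 1) (by simpa [γ] using hx)
    (by simpa [γ] using hy) one_pos hderiv
  simp only [slope_def_field, Function.comp, γ, AffineMap.lineMap_apply_zero,
    AffineMap.lineMap_apply_one, sub_zero, div_one] at hslope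
  linarith

end FirstOrder

section Gradient

variable {E : Type*} [NormedAddCommGroup E] [InnerProductSpace ℝ E] [CompleteSpace E]
  {f : E → ℝ} {s : Set E} {x y gx gy : E}

theorem ConvexOn.add_inner_gradient_sub_le (hf : ConvexOn ℝ s f) (hx : x ∈ s) (hy : y ∈ s)
    (hgx : HasGradientAt f gx x) : f x + ⟪gx, y - x⟫ ≤ f y :=
  hf.add_fderiv_sub_le hx hy hgx.hasFDerivAt

theorem ConvexOn.inner_gradient_sub_gradient_nonneg (hf : ConvexOn ℝ s f) (hx : x ∈ s)
    (hy : y ∈ s) (hgx : HasGradientAt f gx x) (hgy : HasGradientAt f gy y) :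
    0 ≤ ⟪gx - gy, x - y⟫ := by
  have hxy := hf.add_inner_gradient_sub_le hx hy hgx
  have hyx := hf.add_inner_gradient_sub_le hy hx hgy
  have hswap : ⟪gx, y - x⟫ = -⟪gx, x - y⟫ := by rw [← inner_neg_right, neg_sub]
  rw [inner_sub_left]
  linarith

end Gradient

theorem prox_grad_inner_le_general {d : ℕ}
    (f : EuclideanSpace ℝ (Fin d) → ℝ)
    (f' : EuclideanSpace ℝ (Fin d) → EuclideanSpace ℝ (Fin d))
    (hfconv : ConvexOn ℝ Set.univ f)
    (hgrad : ∀ z, HasGradientAt f (f' z) z)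
    (α : ℝ) (hα : 0 < α)
    (xprev xk u : EuclideanSpace ℝ (Fin d))
    (hxk : xk = xprev - α • (f' xprev + u)) :
    ⟪f' xk + u, f' xprev + u⟫ ≤ ‖f' xprev + u‖ ^ 2 := by
  set v := f' xprev + u
  have hstep : xprev - xk = α • v := by rw [hxk, sub_sub_cancel]
  have hmono := hfconv.inner_gradient_sub_gradient_nonneg (Set.mem_univ xprev)
    (Set.mem_univ xk) (hgrad xprev) (hgrad xk)
  rw [hstep, real_inner_smul_right] at hmono
  have hdiff : f' xprev - f' xk = v - (f' xk + u) := by simp only [v]; abel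
  have hkey : 0 ≤ ⟪v, v⟫ - ⟪f' xk + u, v⟫ := by
    rw [← inner_sub_left, ← hdiff]
    exact nonneg_of_mul_nonneg_right hmono hα
  rw [← real_inner_self_eq_norm_sq]
  linarith

theorem prox_grad_inner_le {d : ℕ}
    (f g : EuclideanSpace ℝ (Fin d) → ℝ)
    (f' : EuclideanSpace ℝ (Fin d) → EuclideanSpace ℝ (Fin d))
    (hfconv : ConvexOn ℝ Set.univ f)
    (hgconv : ConvexOn ℝ Set.univ g)
    (hglsc : LowerSemicontinuous g)
    (hgrad : ∀ z, HasGradientAt f (f' z) z)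
    (α : ℝ) (hα : 0 < α)
    (xprev xk u : EuclideanSpace ℝ (Fin d))
    -- u = u^k ∈ ∂g(x^k) is the subgradient from the implicit proximal update
    (hu : ∀ y, g xk + ⟪u, y - xk⟫ ≤ g y)
    (hxk : xk = xprev - α • (f' xprev + u)) :
    ⟪f' xk + u, f' xprev + u⟫ ≤ ‖f' xprev + u‖ ^ 2 :=
  prox_grad_inner_le_general f f' hfconv hgrad α hα xprev xk u hxk
end

section
/- Suppose positive reals α_{k-1}, α_k satisfy 1/α_{k-1}² + 1/α_k² = 2L_k² with L_k > 0. Then α_k ≥ 1/(√2 L_k) and α_{k-1} + α_k ≥ 2/L_k. -/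
theorem stepsize_lower_bounds (a b L : ℝ) (ha : 0 < a) (hb : 0 < b) (hL : 0 < L)
    (h : 1 / a ^ 2 + 1 / b ^ 2 = 2 * L ^ 2) :
    b ≥ 1 / (Real.sqrt 2 * L) ∧ a + b ≥ 2 / L := by
  have ha2 : (0:ℝ) < a ^ 2 := by positivity
  have hb2 : (0:ℝ) < b ^ 2 := by positivity
  have h' : b ^ 2 + a ^ 2 = 2 * L ^ 2 * a ^ 2 * b ^ 2 := by
    field_simp at h
    linarith [h]
  have hs : Real.sqrt 2 ^ 2 = 2 := Real.sq_sqrt (by norm_num)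
  have hspos : 0 < Real.sqrt 2 := Real.sqrt_pos.mpr (by norm_num)
  have h1 : 1 ≤ 2 * L ^ 2 * b ^ 2 := by
    nlinarith [sq_nonneg (a*b), mul_pos ha2 hb2]
  constructor
  · rw [ge_iff_le, div_le_iff₀ (by positivity)]
    nlinarith [mul_pos (mul_pos hspos hL) hb, sq_nonneg (Real.sqrt 2 * L * b - 1)]
  · rw [ge_iff_le, div_le_iff₀ hL]
    have hkey : 4 ≤ ((a + b) * L) ^ 2 := by
      have hab : (0:ℝ) < a ^ 2 * b ^ 2 := by positivity
      have hineq : (a + b) ^ 2 * (a ^ 2 + b ^ 2) ≥ 8 * (a ^ 2 * b ^ 2) := by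
        nlinarith [sq_nonneg (a ^ 2 - b ^ 2),
          mul_nonneg (mul_pos ha hb).le (sq_nonneg (a - b))]
      nlinarith [mul_pos hab hab]
    nlinarith [mul_pos (mul_pos ha hL) hb, mul_pos hL (add_pos ha hb)]
end

section
/- The function f defined by f(x) = x²/2 for |x| ≤ 1 and f(x) = 2(|x| - log(1+|x|)) + 2log2 - 3/2 otherwise is locally strongly convex: on any bounded set X there exists μ > 0 such that |f'(x) - f'(y)| ≥ μ|x - y| for all x, y ∈ X. In particular one may take μ = 1/max_{z∈X}(1+|z|)². -/
/-- The counterexample function from the paper: `x²/2` for `|x| ≤ 1` and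
`2(|x| - log(1+|x|)) + 2 log 2 - 3/2` for `|x| > 1`. -/
noncomputable def badf (x : ℝ) : ℝ :=
  if |x| ≤ 1 then x ^ 2 / 2
  else 2 * (|x| - Real.log (1 + |x|)) + 2 * Real.log 2 - 3 / 2

/-!
The derivative `f'` is odd, equal to `x` on `[-1, 1]` and to `2x / (1 + x)` on `[1, ∞)`. Between
two points of `[1, M]` its difference quotient is `2 / ((1 + x)(1 + y)) ≥ 2 / (1 + M)²`, and on
`[-1, 1]` it is `1`; so `f' x - μ x` is monotone on `[0, 1]` and on `[1, M]` for
`μ = 1 / (1 + M)²`, hence on `[0, M]`, on `[-M, 0]` by oddness, and on `[-M, M]`. Monotonicity of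
`f' x - μ x` is exactly `μ |x - y| ≤ |f' x - f' y|`.
-/

open Set Filter Topology

theorem hasDerivAt_ite_le {u v : ℝ → ℝ} {a x u' v' : ℝ} (hu : HasDerivAt u u' x)
    (hv : HasDerivAt v v' x) (hval : u a = v a) (hder : x = a → u' = v') :
    HasDerivAt (fun y => if y ≤ a then u y else v y) (if x ≤ a then u' else v') x := by
  rcases lt_trichotomy x a with hxa | rfl | hxa
  · rw [if_pos hxa.le]
    refine hu.congr_of_eventuallyEq ?_
    filter_upwards [eventually_lt_nhds hxa] with y hy
    rw [if_pos hy.le]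
  · rw [if_pos le_rfl]
    have hleft : HasDerivWithinAt (fun y => if y ≤ x then u y else v y) u' (Iic x) x :=
      hu.hasDerivWithinAt.congr (fun y hy => if_pos hy) (if_pos le_rfl)
    have hright : HasDerivWithinAt (fun y => if y ≤ x then u y else v y) u' (Ici x) x := by
      refine (hder rfl ▸ hv).hasDerivWithinAt.congr (fun y (hy : x ≤ y) => ?_) (by simp [hval])
      rcases hy.eq_or_lt with rfl | hy
      · simp [hval]
      · rw [if_neg hy.not_ge]
    simpa using hleft.union hright
  · rw [if_neg hxa.not_ge]
    refine hv.congr_of_eventuallyEq ?_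
    filter_upwards [eventually_gt_nhds hxa] with y hy
    rw [if_neg hy.not_ge]

theorem MonotoneOn.neg_of_odd {α β : Type*} [AddCommGroup α] [PartialOrder α]
    [IsOrderedAddMonoid α] [AddCommGroup β] [PartialOrder β] [IsOrderedAddMonoid β]
    {f : α → β} {s : Set α} (hodd : ∀ x, f (-x) = -f x) (hf : MonotoneOn f s) :
    MonotoneOn f (-s) := by
  intro x hx y hy hxy
  have := hf hy hx (neg_le_neg hxy)
  rwa [hodd, hodd, neg_le_neg_iff] at this

theorem MonotoneOn.mul_abs_sub_le_abs_sub {g : ℝ → ℝ} {s : Set ℝ} {μ x y : ℝ}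
    (hμ : 0 ≤ μ) (hg : MonotoneOn (fun z => g z - μ * z) s) (hx : x ∈ s) (hy : y ∈ s) :
    μ * |x - y| ≤ |g x - g y| := by
  wlog hxy : x ≤ y generalizing x y
  · rw [abs_sub_comm, abs_sub_comm (g x)]
    exact this hy hx (le_of_not_ge hxy)
  have hmono := hg hx hy hxy
  have hgap : 0 ≤ μ * (y - x) := mul_nonneg hμ (sub_nonneg.2 hxy)
  rw [abs_of_nonpos (sub_nonpos.2 hxy), abs_of_nonpos (by linarith)]
  linarith

noncomputable def badfDeriv (x : ℝ) : ℝ := if |x| ≤ 1 then x else 2 * x / (1 + |x|)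

theorem badf_neg (x : ℝ) : badf (-x) = badf x := by
  simp only [badf, abs_neg, neg_sq]

theorem badfDeriv_neg (x : ℝ) : badfDeriv (-x) = -badfDeriv x := by
  simp only [badfDeriv, abs_neg]
  split_ifs <;> ring

theorem badfDeriv_of_abs_le {x : ℝ} (hx : |x| ≤ 1) : badfDeriv x = x := if_pos hx

theorem badfDeriv_of_one_le {x : ℝ} (hx : 1 ≤ x) : badfDeriv x = 2 * x / (1 + x) := by
  rcases hx.eq_or_lt with rfl | hx
  · norm_num [badfDeriv]
  · rw [badfDeriv, abs_of_pos (by linarith), if_neg hx.not_ge]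

theorem hasDerivAt_badf_tail {x : ℝ} (hx : -1 < x) :
    HasDerivAt (fun y => 2 * (y - Real.log (1 + y)) + 2 * Real.log 2 - 3 / 2)
      (2 * x / (1 + x)) x := by
  have hpos : 0 < 1 + x := by linarith
  have hlog : HasDerivAt (fun y => Real.log (1 + y)) (1 / (1 + x)) x := by
    simpa using ((hasDerivAt_id x).const_add 1).log hpos.ne'
  refine ((((hasDerivAt_id' x).sub hlog).const_mul 2).add_const (2 * Real.log 2)
    |>.sub_const (3 / 2)).congr_deriv ?_
  field_simp
  ring

theorem badf_eventuallyEq_of_neg_one_lt {x : ℝ} (hx : -1 < x) :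
    badf =ᶠ[𝓝 x] fun y =>
      if y ≤ 1 then y ^ 2 / 2 else 2 * (y - Real.log (1 + y)) + 2 * Real.log 2 - 3 / 2 := by
  filter_upwards [eventually_gt_nhds hx] with y hy
  by_cases hy1 : y ≤ 1
  · rw [badf, if_pos (abs_le.2 ⟨hy.le, hy1⟩), if_pos hy1]
  · rw [badf, abs_of_pos (by linarith), if_neg hy1]

theorem hasDerivAt_badf_of_neg_one_lt {x : ℝ} (hx : -1 < x) :
    HasDerivAt badf (badfDeriv x) x := by
  have hquad : HasDerivAt (fun y : ℝ => y ^ 2 / 2) x x := by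
    simpa using (hasDerivAt_pow 2 x).div_const 2
  have hglued := hasDerivAt_ite_le (a := 1) hquad (hasDerivAt_badf_tail hx)
    (by norm_num; ring) (by rintro rfl; norm_num)
  refine (hglued.congr_of_eventuallyEq (badf_eventuallyEq_of_neg_one_lt hx)).congr_deriv ?_
  split_ifs with hx1
  · exact (badfDeriv_of_abs_le (abs_le.2 ⟨by linarith, hx1⟩)).symm
  · exact (badfDeriv_of_one_le (by linarith)).symm

theorem deriv_badf : deriv badf = badfDeriv := by
  ext x
  rcases lt_or_ge (-1) x with hx | hx
  · exact (hasDerivAt_badf_of_neg_one_lt hx).deriv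
  · have heven : badf = fun y => badf (-y) := funext fun y => (badf_neg y).symm
    rw [heven, deriv_comp_neg, (hasDerivAt_badf_of_neg_one_lt (by linarith)).deriv,
      badfDeriv_neg, neg_neg]

section StrongMonotonicity

variable {μ M : ℝ}

theorem monotoneOn_badfDeriv_sub_Icc_zero_one (hμ : μ ≤ 1) :
    MonotoneOn (fun x => badfDeriv x - μ * x) (Icc 0 1) := by
  intro x ⟨hx0, _⟩ y ⟨_, hy1⟩ hxy
  dsimp only
  rw [badfDeriv_of_abs_le (abs_le.2 ⟨by linarith, by linarith⟩),
    badfDeriv_of_abs_le (abs_le.2 ⟨by linarith, hy1⟩)]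
  nlinarith

theorem monotoneOn_badfDeriv_sub_Icc_one (hμ : 0 ≤ μ) (hμM : μ * (1 + M) ^ 2 ≤ 2) :
    MonotoneOn (fun x => badfDeriv x - μ * x) (Icc 1 M) := by
  intro x ⟨hx1, _⟩ y ⟨_, hyM⟩ hxy
  dsimp only
  rw [badfDeriv_of_one_le hx1, badfDeriv_of_one_le (hx1.trans hxy)]
  have hx : 0 < 1 + x := by linarith
  have hy : 0 < 1 + y := by linarith
  have hdiff : 2 * y / (1 + y) - 2 * x / (1 + x) = 2 * (y - x) / ((1 + x) * (1 + y)) := by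
    field_simp
    ring
  have hprod : μ * ((1 + x) * (1 + y)) ≤ 2 :=
    le_trans (mul_le_mul_of_nonneg_left (by nlinarith) hμ) hμM
  have hslope : μ * (y - x) ≤ 2 * (y - x) / ((1 + x) * (1 + y)) := by
    rw [le_div_iff₀ (by positivity)]
    nlinarith [sub_nonneg.2 hxy]
  linarith

theorem monotoneOn_badfDeriv_sub (hM : 1 ≤ M) (hμ : 0 ≤ μ) (hμM : μ * (1 + M) ^ 2 ≤ 2) :
    MonotoneOn (fun x => badfDeriv x - μ * x) (Icc (-M) M) := by
  have hμ1 : μ ≤ 1 := by nlinarith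
  have hright : MonotoneOn (fun x => badfDeriv x - μ * x) (Icc 0 M) := by
    rw [← Icc_union_Icc_eq_Icc zero_le_one hM]
    exact (monotoneOn_badfDeriv_sub_Icc_zero_one hμ1).union_right
      (monotoneOn_badfDeriv_sub_Icc_one hμ hμM) (isGreatest_Icc zero_le_one)
      (isLeast_Icc hM)
  have hleft : MonotoneOn (fun x => badfDeriv x - μ * x) (Icc (-M) 0) := by
    simpa [neg_Icc] using hright.neg_of_odd fun x => by simp only [badfDeriv_neg]; ring
  rw [← Icc_union_Icc_eq_Icc (b := 0) (by linarith) (by linarith)]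
  exact hleft.union_right hright (isGreatest_Icc (by linarith)) (isLeast_Icc (by linarith))

end StrongMonotonicity

theorem badf_locally_strongly_convex :
    ∀ X : Set ℝ, Bornology.IsBounded X →
      ∃ μ > (0 : ℝ), ∀ x ∈ X, ∀ y ∈ X, μ * |x - y| ≤ |deriv badf x - deriv badf y| := by
  intro X hX
  obtain ⟨C, hC⟩ := isBounded_iff_forall_norm_le.1 hX
  set M := max C 1
  have hXM : X ⊆ Icc (-M) M := fun z hz => abs_le.1 ((hC z hz).trans (le_max_left _ _))
  have hM : (0 : ℝ) < (1 + M) ^ 2 := by positivity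
  have hμM : ((1 + M) ^ 2)⁻¹ * (1 + M) ^ 2 ≤ 2 := by
    rw [inv_mul_cancel₀ hM.ne']
    norm_num
  have hmono := monotoneOn_badfDeriv_sub (le_max_right C 1) (inv_nonneg.2 hM.le) hμM
  refine ⟨((1 + M) ^ 2)⁻¹, inv_pos.2 hM, fun x hx y hy => ?_⟩
  rw [deriv_badf]
  exact hmono.mul_abs_sub_le_abs_sub (inv_nonneg.2 hM.le) (hXM hx) (hXM hy)
end

section
/- For any c ≥ 1 there exists an initial point x^0 such that the iteration x^{k+1} = x^k - α_k f'(x^k) with α_0 = 1 and α_k = |x^k - x^{k-1}|/(c|f'(x^k) - f'(x^{k-1})|) for k ≥ 1 applied to f(x) = x²/2 on [-1,1] and f(x) = 2(|x| - log(1+|x|)) + 2log2 - 3/2 elsewhere produces a divergent sequence with |x^{2k}| → ∞. -/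
open Filter Topology

lemma badf_eventuallyEq {x : ℝ} (hx : 1 < |x|) :
    badf =ᶠ[𝓝 x] fun y => 2 * (|y| - Real.log (1 + |y|)) + 2 * Real.log 2 - 3 / 2 := by
  filter_upwards [(isOpen_lt continuous_const continuous_abs).mem_nhds hx] with y hy
  exact if_neg (not_le.mpr hy)

lemma deriv_badf_of_one_lt_abs {x : ℝ} (hx : 1 < |x|) : deriv badf x = 2 * x / (1 + |x|) := by
  have hx0 : x ≠ 0 := by rintro rfl; norm_num at hx
  have hpos : 0 < 1 + |x| := by positivity
  have habs := hasDerivAt_abs hx0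
  have hlog := ((habs.const_add 1).log hpos.ne')
  have hd : HasDerivAt (fun y => 2 * (|y| - Real.log (1 + |y|)) + 2 * Real.log 2 - 3 / 2)
      (2 * (SignType.sign x - SignType.sign x / (1 + |x|))) x :=
    (((habs.sub hlog).const_mul 2).add_const _).sub_const _
  rw [(badf_eventuallyEq hx).deriv_eq, hd.deriv]
  field_simp
  linear_combination sign_mul_abs x

noncomputable def curvatureStep (c p q : ℝ) : ℝ :=
  q - |q - p| / (c * |deriv badf q - deriv badf p|) * deriv badf q

lemma curvatureStep_eq {c p q : ℝ} (hp : 1 < |p|) (hq : 1 < |q|) :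
    curvatureStep c p q =
      q * (1 - |q - p| * (1 + |p|) / (c * |q * (1 + |p|) - p * (1 + |q|)|)) := by
  have hA : 0 < 1 + |p| := by positivity
  have hB : 0 < 1 + |q| := by positivity
  have hdiff : 2 * q / (1 + |q|) - 2 * p / (1 + |p|) =
      2 * (q * (1 + |p|) - p * (1 + |q|)) / ((1 + |p|) * (1 + |q|)) := by
    field_simp
  rw [curvatureStep, deriv_badf_of_one_lt_abs hp, deriv_badf_of_one_lt_abs hq, hdiff,
    abs_div, abs_mul, abs_two, abs_of_pos (mul_pos hA hB)]
  rcases eq_or_ne (c * |q * (1 + |p|) - p * (1 + |q|)|) 0 with h | h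
  · -- a vanishing secant slope makes both step sizes `0`
    have h' : c * (2 * |q * (1 + |p|) - p * (1 + |q|)| / ((1 + |p|) * (1 + |q|))) =
        2 * (c * |q * (1 + |p|) - p * (1 + |q|)|) / ((1 + |p|) * (1 + |q|)) := by ring
    rw [h', h]
    simp
  · field_simp

lemma curvatureStep_of_same_sign {c p q : ℝ} (hp : 1 < |p|) (hq : 1 < |q|) (hpq : 0 < p * q)
    (hne : p ≠ q) : curvatureStep c p q = q * (1 - (1 + |p|) / c) := by
  have hN : q * (1 + |p|) - p * (1 + |q|) = q - p := by
    rcases pos_and_pos_or_neg_and_neg_of_mul_pos hpq with ⟨hp0, hq0⟩ | ⟨hp0, hq0⟩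
    · rw [abs_of_pos hp0, abs_of_pos hq0]; ring
    · rw [abs_of_neg hp0, abs_of_neg hq0]; ring
  have hqp : |q - p| ≠ 0 := abs_ne_zero.mpr (sub_ne_zero.mpr hne.symm)
  rw [curvatureStep_eq hp hq, hN, mul_comm c, ← div_div, mul_div_cancel_left₀ _ hqp]

lemma curvatureStep_of_opposite_sign {c p q : ℝ} (hp : 1 < |p|) (hq : 1 < |q|)
    (hpq : p * q < 0) :
    curvatureStep c p q =
      q * (1 - (|p| + |q|) * (1 + |p|) / (c * (|q| * (1 + |p|) + |p| * (1 + |q|)))) := by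
  rw [curvatureStep_eq hp hq]
  rcases mul_neg_iff.mp hpq with ⟨hp0, hq0⟩ | ⟨hp0, hq0⟩
  · rw [abs_of_pos hp0, abs_of_neg hq0, abs_of_neg (by linarith : q - p < 0),
      abs_of_neg (by nlinarith : q * (1 + p) - p * (1 + -q) < 0)]
    ring_nf
  · rw [abs_of_neg hp0, abs_of_pos hq0, abs_of_pos (by linarith : 0 < q - p),
      abs_of_pos (by nlinarith : 0 < q * (1 + -p) - p * (1 + q))]
    ring_nf

-- `12 * c ≤ |p|` makes the fling factor `(1 + |p|) / c - 1` at least `11`.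
def IsLaunchPair (c p q : ℝ) : Prop :=
  0 < p * q ∧ 12 * c ≤ |p| ∧ |p| / 4 ≤ |q| ∧ |q| < |p|

lemma IsLaunchPair.fling {c p q : ℝ} (hc : 1 ≤ c) (h : IsLaunchPair c p q) :
    q * curvatureStep c p q < 0 ∧ 11 * |q| ≤ |curvatureStep c p q| ∧
      2 * |p| ≤ |curvatureStep c p q| := by
  obtain ⟨hpq, hp, hq, hqp⟩ := h
  have hc0 : 0 < c := by linarith
  have hfactor : 1 - (1 + |p|) / c ≤ -11 := by
    rw [sub_le_iff_le_add, ← sub_le_iff_le_add', le_div_iff₀ hc0]; linarith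
  have hq0 : q ≠ 0 := by rintro rfl; simp at hpq
  rw [curvatureStep_of_same_sign (by linarith) (by linarith) hpq (by rintro rfl; simp at hqp),
    abs_mul, abs_of_neg (by linarith : 1 - (1 + |p|) / c < 0)]
  refine ⟨?_, by nlinarith [abs_nonneg q], by nlinarith [abs_nonneg q]⟩
  rw [← mul_assoc]
  exact mul_neg_of_pos_of_neg (mul_self_pos.mpr hq0) (by linarith)

lemma curvatureStep_of_opposite_sign_bounds {c q r : ℝ} (hc : 1 ≤ c) (hq : 1 < |q|) (hqr : q * r < 0)
    (hr : 11 * |q| ≤ |r|) :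
    0 < r * curvatureStep c q r ∧ |r| / 4 ≤ |curvatureStep c q r| ∧
      |curvatureStep c q r| < |r| := by
  set t := (|q| + |r|) * (1 + |q|) / (c * (|r| * (1 + |q|) + |q| * (1 + |r|))) with ht
  have hden : 0 < |r| * (1 + |q|) + |q| * (1 + |r|) := by positivity
  have ht0 : 0 < t := by positivity
  have ht34 : t ≤ 3 / 4 := by
    rw [ht, div_le_iff₀ (by positivity)]
    nlinarith [mul_le_mul_of_nonneg_right hc hden.le]
  have hr0 : r ≠ 0 := by rintro rfl; simp at hqr
  rw [curvatureStep_of_opposite_sign hq (by linarith) hqr, ← ht, abs_mul,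
    abs_of_pos (by linarith : 0 < 1 - t)]
  refine ⟨?_, by nlinarith [abs_nonneg r], by nlinarith [abs_pos.mpr hr0]⟩
  rw [← mul_assoc]
  exact mul_pos (mul_self_pos.mpr hr0) (by linarith)

lemma IsLaunchPair.next {c p q : ℝ} (hc : 1 ≤ c) (h : IsLaunchPair c p q) :
    IsLaunchPair c (curvatureStep c p q) (curvatureStep c q (curvatureStep c p q)) ∧
      2 * |p| ≤ |curvatureStep c p q| := by
  obtain ⟨hqr, hr, hpr⟩ := h.fling hc
  obtain ⟨-, hp, hqp, -⟩ := h
  obtain ⟨hrs, hs, hs'⟩ := curvatureStep_of_opposite_sign_bounds hc (by linarith) hqr hr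
  exact ⟨⟨hrs, by linarith, hs, hs'⟩, hpr⟩

lemma isLaunchPair_start {c : ℝ} (hc : 1 ≤ c) :
    IsLaunchPair c (12 * c) (12 * c - deriv badf (12 * c)) := by
  have ha : |12 * c| = 12 * c := abs_of_pos (by linarith)
  have hg : deriv badf (12 * c) = 2 * (12 * c) / (1 + 12 * c) := by
    rw [deriv_badf_of_one_lt_abs (by rw [ha]; linarith), ha]
  have hg0 : 0 < 2 * (12 * c) / (1 + 12 * c) := by positivity
  have hg2 : 2 * (12 * c) / (1 + 12 * c) < 2 := by
    rw [div_lt_iff₀ (by linarith)]; linarith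
  unfold IsLaunchPair
  rw [hg, ha, abs_of_pos (by linarith)]
  refine ⟨mul_pos (by linarith) (by linarith), le_rfl, by linarith, by linarith⟩

lemma iterate_eq_curvatureStep {c : ℝ} {x α : ℕ → ℝ}
    (hα : ∀ k ≥ 1, α k = |x k - x (k - 1)| / (c * |deriv badf (x k) - deriv badf (x (k - 1))|))
    (hx : ∀ k, x (k + 1) = x k - α k * deriv badf (x k)) (k : ℕ) :
    x (k + 2) = curvatureStep c (x k) (x (k + 1)) := by
  rw [hx (k + 1), hα (k + 1) (Nat.le_add_left 1 k), Nat.add_sub_cancel, curvatureStep]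

/-- Gradient descent with the pure local-curvature stepsize (no growth control)
diverges on `badf` for a suitable starting point. -/
theorem bad_gd_diverges :
    ∀ c : ℝ, 1 ≤ c → ∃ x0 : ℝ, ∀ x : ℕ → ℝ, ∀ α : ℕ → ℝ,
      x 0 = x0 → α 0 = 1 →
      (∀ k ≥ 1, α k = |x k - x (k - 1)| / (c * |deriv badf (x k) - deriv badf (x (k - 1))|)) →
      (∀ k, x (k + 1) = x k - α k * deriv badf (x k)) →
      Filter.Tendsto (fun k => |x (2 * k)|) Filter.atTop Filter.atTop := by
  intro c hc
  refine ⟨12 * c, fun x α hx0 hα0 hα hx => ?_⟩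
  have hstep := iterate_eq_curvatureStep hα hx
  have hinv : ∀ k, IsLaunchPair c (x (2 * k)) (x (2 * k + 1)) ∧ 2 ^ k * (12 * c) ≤ |x (2 * k)| := by
    intro k
    induction k with
    | zero =>
      rw [hx 0, hα0, one_mul, hx0]
      exact ⟨isLaunchPair_start hc, by simp [abs_of_pos (by linarith : 0 < 12 * c)]⟩
    | succ k ih =>
      have hx2 : x (2 * (k + 1)) = curvatureStep c (x (2 * k)) (x (2 * k + 1)) := hstep (2 * k)
      have hx3 : x (2 * (k + 1) + 1) = curvatureStep c (x (2 * k + 1)) (x (2 * (k + 1))) :=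
        hstep (2 * k + 1)
      obtain ⟨hnext, hgrow⟩ := ih.1.next hc
      rw [hx3, hx2, pow_succ]
      exact ⟨hnext, by linarith [ih.2]⟩
  have hlim : Tendsto (fun k : ℕ => 2 ^ k * (12 * c)) atTop atTop :=
    (tendsto_pow_atTop_atTop_of_one_lt one_lt_two).atTop_mul_const (by linarith)
  exact tendsto_atTop_mono (fun k => (hinv k).2) hlim
end

section
/- Consider gradient descent iterates x^k = x^{k-1} - α_{k-1}∇f(x^{k-1}), x^{k+1} = x^k - α_k∇f(x^k) with stepsize satisfying α_k²(L_k² - 1/(2α_{k-1}²)) ≤ 1/2 where L_k = ‖∇f(x^k)-∇f(x^{k-1})‖/‖x^k-x^{k-1}‖. Then ‖x^{k+1} - x^k‖² ≤ (1/2)‖x^k - x^{k-1}‖² + (3/2) α_k θ_k (f(x^{k-1}) - f(x^k)), with θ_k = α_k/α_{k-1}. -/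
open scoped RealInnerProductSpace

lemma grad_first_order {d : ℕ}
    (f : EuclideanSpace ℝ (Fin d) → ℝ) (f' : EuclideanSpace ℝ (Fin d) → EuclideanSpace ℝ (Fin d))
    (hconv : ConvexOn ℝ Set.univ f)
    (hgrad : ∀ z, HasGradientAt f (f' z) z)
    (x y : EuclideanSpace ℝ (Fin d)) :
    ⟪f' x, y - x⟫ ≤ f y - f x := by
  set L : ℝ →ᵃ[ℝ] EuclideanSpace ℝ (Fin d) := AffineMap.lineMap x y
  have hg : ConvexOn ℝ (L ⁻¹' Set.univ) (f ∘ L) := hconv.comp_affineMap L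
  have hLd : HasDerivAt (fun t : ℝ => L t) (y - x) 0 := by
    have : (fun t : ℝ => L t) = fun t : ℝ => t • (y - x) + x := by
      funext t; simp [L, AffineMap.lineMap_apply]
    rw [this]
    simpa using ((hasDerivAt_id (0:ℝ)).smul_const (y - x)).add_const x
  have hderiv : HasDerivAt (f ∘ L) ⟪f' x, y - x⟫ 0 := by
    have hF : HasFDerivAt f (InnerProductSpace.toDual ℝ _ (f' x)) (L 0) := by
      have h0 : L 0 = x := by simp [L]
      rw [h0]; exact (hgrad x).hasFDerivAt
    simpa using hF.comp_hasDerivAt 0 hLd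
  have hle := hg.le_slope_of_hasDerivAt (by simp) (by simp) (by norm_num : (0:ℝ) < 1) hderiv
  have hs : slope (f ∘ L) 0 1 = f y - f x := by
    simp [slope, L, AffineMap.lineMap_apply]
  rwa [hs] at hle

set_option maxHeartbeats 1000000 in
theorem adgd2_step_decrease {d : ℕ}
    (f : EuclideanSpace ℝ (Fin d) → ℝ) (f' : EuclideanSpace ℝ (Fin d) → EuclideanSpace ℝ (Fin d))
    (hconv : ConvexOn ℝ Set.univ f)
    (hgrad : ∀ z, HasGradientAt f (f' z) z)
    (αp αk : ℝ) (hαp : 0 < αp) (hαk : 0 < αk)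
    (xp xk x1 : EuclideanSpace ℝ (Fin d)) (hne : xk ≠ xp)
    (hxk : xk = xp - αp • f' xp)
    (hx1 : x1 = xk - αk • f' xk)
    (hstep : αk ^ 2 * ((‖f' xk - f' xp‖ / ‖xk - xp‖) ^ 2 - 1 / (2 * αp ^ 2)) ≤ 1 / 2) :
    ‖x1 - xk‖ ^ 2 ≤ (1 / 2) * ‖xk - xp‖ ^ 2 + (3 / 2) * αk * (αk / αp) * (f xp - f xk) := by
  set gp := f' xp with hgp
  set gk := f' xk with hgk
  have hsub : xk - xp = -(αp • gp) := by rw [hxk]; abel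
  have hsub' : xp - xk = αp • gp := by rw [hxk]; abel
  have hsub1 : x1 - xk = -(αk • gk) := by rw [hx1]; abel
  have h1 : ⟪gk, xp - xk⟫ ≤ f xp - f xk := grad_first_order f f' hconv hgrad xk xp
  have h2 : ⟪gp, xk - xp⟫ ≤ f xk - f xp := grad_first_order f f' hconv hgrad xp xk
  set P := ‖gp‖ with hP
  set K := ‖gk‖ with hK
  set A := ⟪gk, gp⟫ with hA
  have hPpos : 0 < P := by
    rw [hP, norm_pos_iff]
    intro h
    exact hne (by rw [hxk, h, smul_zero, sub_zero])
  have hnxx : ‖xk - xp‖ = αp * P := by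
    rw [hsub, norm_neg, norm_smul, Real.norm_eq_abs, abs_of_pos hαp]
  have hnx1 : ‖x1 - xk‖ = αk * K := by
    rw [hsub1, norm_neg, norm_smul, Real.norm_eq_abs, abs_of_pos hαk]
  have hin1 : ⟪gk, xp - xk⟫ = αp * A := by
    rw [hsub', real_inner_smul_right]
  have hin2 : ⟪gp, xk - xp⟫ = -(αp * (P * P)) + 0 := by
    rw [hsub, inner_neg_right, real_inner_smul_right, real_inner_self_eq_norm_mul_norm]
    ring
  have hfA : αp * A ≤ f xp - f xk := by rw [← hin1]; exact h1
  have hmono : A ≤ P ^ 2 := by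
    have : αp * A + (-(αp * (P * P)) + 0) ≤ 0 := by
      rw [← hin1, ← hin2]; linarith
    nlinarith
  have hexp : ‖gk - gp‖ ^ 2 = K ^ 2 - 2 * A + P ^ 2 := by
    rw [norm_sub_sq_real, hK, hP, hA]
  have hap2 : (0:ℝ) < (αp * P) ^ 2 := by positivity
  have key : αk ^ 2 * ‖gk - gp‖ ^ 2 ≤ (αp * P) ^ 2 / 2 + αk ^ 2 * P ^ 2 / 2 := by
    rw [hnxx] at hstep
    have h2' := mul_le_mul_of_nonneg_right hstep hap2.le
    have hexp2 : αk ^ 2 * ((‖gk - gp‖ / (αp * P)) ^ 2 - 1 / (2 * αp ^ 2)) * (αp * P) ^ 2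
        = αk ^ 2 * ‖gk - gp‖ ^ 2 - αk ^ 2 * P ^ 2 / 2 := by
      field_simp
    rw [hexp2] at h2'
    linarith
  have hDa : (3 / 2) * αk * (αk / αp) * (αp * A) ≤ (3 / 2) * αk * (αk / αp) * (f xp - f xk) :=
    mul_le_mul_of_nonneg_left hfA (by positivity)
  have hsimp : (3 / 2) * αk * (αk / αp) * (αp * A) = (3 / 2) * αk ^ 2 * A := by
    field_simp
  rw [hnx1, hnxx]
  rw [hsimp] at hDa
  nlinarith [mul_le_mul_of_nonneg_left hmono (sq_nonneg αk), key, hexp, hDa]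
end
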